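/- arXiv:1909.06222 — 4 statements merged into one kernel-verified Lean document; each statement's English description precedes it below -/
import Mathlib

section
/- Let f₁,...,f_m be proper, lsc, prox-bounded with thresholds r_i, let r > max_i r_i, let δ : Λ → ℝ be continuous with δ(λ) = 0 iff λ is a unit vector e_i, and define PA_{r,δ}(x,λ) := -e_{r+δ(λ)}( -Σ_i λ_i e_r f_i )(x). Then for each λ ∈ Λ, PA_{r,δ}(·,λ) is a proper (real-valued) function of x. -/
/-!
The envelope of a real-valued function is nowhere `⊤`, being bounded by the function's value at
the point itself. For finiteness somewhere, pick `xᵢ` with `fᵢ xᵢ` finite: then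
`e_r fᵢ y ≤ fᵢ xᵢ + r/2 ‖xᵢ - y‖²`, and by the bias–variance identity the `λ`-average of these
quadratics is `r/2 ‖y - x̄‖²` plus a constant, `x̄` the barycenter. Since `δ λ ≥ 0`, the function
`y ↦ -∑ λᵢ e_r fᵢ y + (r + δ λ)/2 ‖y - x̄‖²` is therefore bounded below, so the envelope at `x̄`
is not `⊥`.
-/

noncomputable def moreau {n : ℕ} (r : ℝ) (f : EuclideanSpace ℝ (Fin n) → EReal)
    (x : EuclideanSpace ℝ (Fin n)) : EReal :=
  ⨅ y, f y + (((r / 2) * ‖y - x‖ ^ 2 : ℝ) : EReal)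

def simplex (m : ℕ) : Set (Fin m → ℝ) :=
  {lam | (∀ i, 0 ≤ lam i) ∧ ∑ i, lam i = 1}

open Finset

section WeightedMean

variable {E ι : Type*} [NormedAddCommGroup E] [InnerProductSpace ℝ E] [Fintype ι]

theorem sum_mul_norm_sub_sq_eq {w : ι → ℝ} (hw : ∑ i, w i = 1) (x : ι → E) (y : E) :
    ∑ i, w i * ‖x i - y‖ ^ 2
      = ‖y - ∑ i, w i • x i‖ ^ 2 + ∑ i, w i * ‖x i - ∑ j, w j • x j‖ ^ 2 := by
  set xb := ∑ j, w j • x j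
  have hcentered : ∑ i, w i • (x i - xb) = 0 := by
    simp only [xb, smul_sub, sum_sub_distrib, ← sum_smul, hw, one_smul, sub_self]
  have hcross : ∑ i, w i * inner ℝ (x i - xb) (xb - y) = 0 := by
    simp only [← real_inner_smul_left, ← sum_inner, hcentered, inner_zero_left]
  have hsplit : ∀ i, w i * ‖x i - y‖ ^ 2
      = w i * ‖xb - y‖ ^ 2 + w i * ‖x i - xb‖ ^ 2 + 2 * (w i * inner ℝ (x i - xb) (xb - y)) := by
    intro i
    rw [← sub_add_sub_cancel (x i) xb y, norm_add_sq_real]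
    ring
  simp only [hsplit, sum_add_distrib, ← mul_sum, ← sum_mul, hw, hcross, norm_sub_rev y xb]
  ring

end WeightedMean

section Moreau

variable {n : ℕ} {r : ℝ}

theorem moreau_le_add (r : ℝ) (f : EuclideanSpace ℝ (Fin n) → EReal)
    (x y : EuclideanSpace ℝ (Fin n)) :
    moreau r f x ≤ f y + ((r / 2 * ‖y - x‖ ^ 2 : ℝ) : EReal) :=
  iInf_le (fun y => f y + ((r / 2 * ‖y - x‖ ^ 2 : ℝ) : EReal)) y

theorem moreau_coe_ne_top (g : EuclideanSpace ℝ (Fin n) → ℝ) (x : EuclideanSpace ℝ (Fin n)) :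
    moreau r (fun y => (g y : EReal)) x ≠ ⊤ :=
  ne_top_of_le_ne_top (EReal.coe_ne_top (g x + r / 2 * ‖x - x‖ ^ 2)) (moreau_le_add r _ x x)

theorem moreau_coe_ne_bot {g : EuclideanSpace ℝ (Fin n) → ℝ} {x : EuclideanSpace ℝ (Fin n)}
    (B : ℝ) (hB : ∀ y, B ≤ g y + r / 2 * ‖y - x‖ ^ 2) :
    moreau r (fun y => (g y : EReal)) x ≠ ⊥ :=
  ne_bot_of_le_ne_bot (EReal.coe_ne_bot B) <| le_iInf fun y => EReal.coe_le_coe_iff.mpr (hB y)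

theorem toReal_moreau_le {f : EuclideanSpace ℝ (Fin n) → EReal} {x y : EuclideanSpace ℝ (Fin n)}
    (hy_top : f y ≠ ⊤) (hy_bot : f y ≠ ⊥) (hx : moreau r f x ≠ ⊥) :
    (moreau r f x).toReal ≤ (f y).toReal + r / 2 * ‖y - x‖ ^ 2 := by
  have hle := moreau_le_add r f x y
  rw [← EReal.coe_toReal hy_top hy_bot, ← EReal.coe_add] at hle
  exact (EReal.toReal_coe _).symm ▸ EReal.toReal_le_toReal hle hx (EReal.coe_ne_top _)

theorem sum_mul_toReal_moreau_le {m : ℕ} {f : Fin m → EuclideanSpace ℝ (Fin n) → EReal}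
    {x : Fin m → EuclideanSpace ℝ (Fin n)} (hx_top : ∀ i, f i (x i) ≠ ⊤)
    (hx_bot : ∀ i, f i (x i) ≠ ⊥) {lam : Fin m → ℝ} (hlam : lam ∈ simplex m)
    {y : EuclideanSpace ℝ (Fin n)} (hy : ∀ i, moreau r (f i) y ≠ ⊥) :
    ∑ i, lam i * (moreau r (f i) y).toReal
      ≤ ∑ i, lam i * (f i (x i)).toReal + r / 2 * (‖y - ∑ i, lam i • x i‖ ^ 2
          + ∑ i, lam i * ‖x i - ∑ j, lam j • x j‖ ^ 2) := by
  obtain ⟨hnn, hsum⟩ := hlam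
  calc ∑ i, lam i * (moreau r (f i) y).toReal
      ≤ ∑ i, lam i * ((f i (x i)).toReal + r / 2 * ‖x i - y‖ ^ 2) :=
        sum_le_sum fun i _ =>
          mul_le_mul_of_nonneg_left (toReal_moreau_le (hx_top i) (hx_bot i) (hy i)) (hnn i)
    _ = ∑ i, lam i * (f i (x i)).toReal + r / 2 * ∑ i, lam i * ‖x i - y‖ ^ 2 := by
        simp only [mul_add, sum_add_distrib, mul_sum]
        congr 1
        exact sum_congr rfl fun i _ => by ring
    _ = _ := by rw [sum_mul_norm_sub_sq_eq hsum]

end Moreau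

theorem ncProxAverage_proper_general {n m : ℕ} (f : Fin m → EuclideanSpace ℝ (Fin n) → EReal)
    (hne_bot : ∀ i x, f i x ≠ ⊥) (hproper : ∀ i, ∃ x, f i x ≠ ⊤)
    (rth : Fin m → ℝ)
    (hpb : ∀ i, ∀ s : ℝ, rth i < s → ∀ x, moreau s (f i) x ≠ ⊥)
    (r : ℝ) (hr : ∀ i, rth i < r)
    (δ : (Fin m → ℝ) → ℝ)
    (hδnn : ∀ lam ∈ simplex m, 0 ≤ δ lam)
    (lam : Fin m → ℝ) (hlam : lam ∈ simplex m) :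
    (∀ x, -(moreau (r + δ lam)
        (fun y => (((-(∑ i, lam i * (moreau r (f i) y).toReal)) : ℝ) : EReal)) x) ≠ ⊥) ∧
    (∃ x, -(moreau (r + δ lam)
        (fun y => (((-(∑ i, lam i * (moreau r (f i) y).toReal)) : ℝ) : EReal)) x) ≠ ⊤) := by
  refine ⟨fun x => by rw [Ne, EReal.neg_eq_bot_iff]; exact moreau_coe_ne_top _ x, ?_⟩
  choose x hx using hproper
  refine ⟨∑ i, lam i • x i, ?_⟩
  rw [Ne, EReal.neg_eq_top_iff]
  refine moreau_coe_ne_bot (-(∑ i, lam i * (f i (x i)).toReal)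
    - r / 2 * ∑ i, lam i * ‖x i - ∑ j, lam j • x j‖ ^ 2) fun y => ?_
  have hbound := sum_mul_toReal_moreau_le hx (fun i => hne_bot i (x i)) hlam
    (fun i => hpb i r (hr i) y)
  have hδ : 0 ≤ δ lam / 2 * ‖y - ∑ i, lam i • x i‖ ^ 2 := by
    have := hδnn lam hlam
    positivity
  linarith

theorem ncProxAverage_proper {n m : ℕ} (f : Fin m → EuclideanSpace ℝ (Fin n) → EReal)
    (hne_bot : ∀ i x, f i x ≠ ⊥) (hproper : ∀ i, ∃ x, f i x ≠ ⊤)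
    (hlsc : ∀ i, LowerSemicontinuous (f i))
    (rth : Fin m → ℝ)
    (hpb : ∀ i, ∀ s : ℝ, rth i < s → ∀ x, moreau s (f i) x ≠ ⊥)
    (r : ℝ) (hr : ∀ i, rth i < r)
    (δ : (Fin m → ℝ) → ℝ)
    (hδcont : ContinuousOn δ (simplex m))
    (hδnn : ∀ lam ∈ simplex m, 0 ≤ δ lam)
    (hδ0 : ∀ lam ∈ simplex m, (δ lam = 0 ↔ ∃ i, lam = Pi.single i 1))
    (lam : Fin m → ℝ) (hlam : lam ∈ simplex m) :
    (∀ x, -(moreau (r + δ lam)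
        (fun y => (((-(∑ i, lam i * (moreau r (f i) y).toReal)) : ℝ) : EReal)) x) ≠ ⊥) ∧
    (∃ x, -(moreau (r + δ lam)
        (fun y => (((-(∑ i, lam i * (moreau r (f i) y).toReal)) : ℝ) : EReal)) x) ≠ ⊤) :=
  ncProxAverage_proper_general f hne_bot hproper rth hpb r hr δ hδnn lam hlam
end

section
/- Let f : ℝ^n → ℝ ∪ {∞} be proper and lsc such that f + (r/2)|·|² is convex. Then PA_r(·, e_i) = f, i.e., -e_r(-e_r f)(x) = f(x) for all x. -/
open scoped InnerProductSpace

namespace EReal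

noncomputable def addCoeOrderIso (c : ℝ) : EReal ≃o EReal where
  toFun x := x + c
  invFun x := x - c
  left_inv _ := EReal.add_sub_cancel_right
  right_inv _ := EReal.sub_add_cancel
  map_rel_iff' {x y} := by
    change x + c ≤ y + c ↔ x ≤ y
    refine ⟨fun h => ?_, fun h => add_le_add_left h _⟩
    simpa only [EReal.add_sub_cancel_right] using EReal.sub_le_sub h (le_refl (c : EReal))

variable {ι : Sort*}

lemma iInf_sub_coe (g : ι → EReal) (c : ℝ) : (⨅ i, g i) - c = ⨅ i, (g i - c) :=
  (addCoeOrderIso c).symm.map_iInf g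

lemma iSup_sub_coe (g : ι → EReal) (c : ℝ) : (⨆ i, g i) - c = ⨆ i, (g i - c) :=
  (addCoeOrderIso c).symm.map_iSup g

lemma neg_iInf (g : ι → EReal) : -(⨅ i, g i) = ⨆ i, -g i :=
  negOrderIso.map_iInf g

lemma add_coe_sub_coe (a : EReal) (b c : ℝ) : a + b - c = a + ↑(b - c) := by
  rw [sub_eq_add_neg, ← coe_neg, add_assoc, ← coe_add, ← sub_eq_add_neg]

end EReal

lemma LowerSemicontinuous.add_real {α : Type*} [TopologicalSpace α] {f : α → EReal} {g : α → ℝ}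
    (hf : LowerSemicontinuous f) (hg : Continuous g) :
    LowerSemicontinuous fun z => f z + (g z : EReal) :=
  hf.add' (continuous_coe_real_ereal.comp hg).lowerSemicontinuous
    fun _ => EReal.continuousAt_add (.inr (EReal.coe_ne_bot _)) (.inr (EReal.coe_ne_top _))

lemma LowerSemicontinuous.isClosed_real_epigraph {α : Type*} [TopologicalSpace α] {h : α → EReal}
    (hh : LowerSemicontinuous h) : IsClosed {p : α × ℝ | h p.1 ≤ p.2} :=
  hh.isClosed_epigraph.preimage (continuous_id.prodMap continuous_coe_real_ereal)

lemma nonneg_of_forall_ge_lt_add_mul {a b c u : ℝ} (h : ∀ μ, c ≤ μ → u < a + b * μ) : 0 ≤ b := by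
  by_contra! hb
  have hμ := h (max c ((u - a) / b)) (le_max_left _ _)
  have := (div_le_iff_of_neg hb).1 (le_max_right c ((u - a) / b))
  linarith

section Epigraph

variable {E : Type*} {h : E → EReal}

lemma convex_epigraph_of_forall_le [AddCommMonoid E] [Module ℝ E]
    (hconv : ∀ x y : E, ∀ a b : ℝ, 0 ≤ a → 0 ≤ b → a + b = 1 →
      h (a • x + b • y) ≤ (a : EReal) * h x + (b : EReal) * h y) :
    Convex ℝ {p : E × ℝ | h p.1 ≤ p.2} := by
  rintro ⟨x, μ⟩ hx ⟨y, ν⟩ hy a b ha hb hab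
  calc h (a • x + b • y) ≤ (a : EReal) * h x + (b : EReal) * h y := hconv x y a b ha hb hab
    _ ≤ (a : EReal) * μ + (b : EReal) * ν :=
      add_le_add (mul_le_mul_of_nonneg_left hx (EReal.coe_nonneg.2 ha))
        (mul_le_mul_of_nonneg_left hy (EReal.coe_nonneg.2 hb))
    _ = ((a * μ + b * ν : ℝ) : EReal) := by norm_cast

variable [AddCommGroup E] [Module ℝ E] [TopologicalSpace E]

lemma forall_lt_add_apply_sub_of_separation {φ : E →L[ℝ] ℝ} {b u t : ℝ} {x : E} (hb : 0 < b)
    (hxt : φ x + b * t < u) (hsep : ∀ z (μ : ℝ), h z ≤ μ → u < φ z + b * μ) :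
    ∀ z (μ : ℝ), h z ≤ μ → t < μ + (-b⁻¹ • φ) (x - z) := by
  intro z μ hzμ
  have hu := hsep z μ hzμ
  have key : b * t < b * (μ + (-b⁻¹ • φ) (x - z)) := by
    simp only [smul_apply, map_sub, smul_eq_mul]
    field_simp
    linarith
  exact lt_of_mul_lt_mul_left key hb.le

lemma exists_forall_lt_add_apply_sub_of_vertical {φ ψ₀ : E →L[ℝ] ℝ} {u t₀ : ℝ} {x : E}
    (hxu : φ x < u) (hsep : ∀ z (μ : ℝ), h z ≤ μ → u < φ z)
    (hψ₀ : ∀ z (μ : ℝ), h z ≤ μ → t₀ < μ + ψ₀ (x - z)) (M : ℝ) :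
    ∃ ψ : E →L[ℝ] ℝ, ∀ z (μ : ℝ), h z ≤ μ → M < μ + ψ (x - z) := by
  set s := max 0 ((M - t₀) / (u - φ x))
  have hs : M - t₀ ≤ s * (u - φ x) := (div_le_iff₀ (sub_pos.2 hxu)).1 (le_max_right _ _)
  refine ⟨ψ₀ - s • φ, fun z μ hzμ => ?_⟩
  have hgap : s * (u - φ x) ≤ s * (φ z - φ x) :=
    mul_le_mul_of_nonneg_left (by linarith [hsep z μ hzμ]) (le_max_left _ _)
  have hψ : (ψ₀ - s • φ) (x - z) = ψ₀ (x - z) + s * (φ z - φ x) := by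
    simp only [sub_apply, map_sub, smul_apply, smul_eq_mul]; ring
  linarith [hψ₀ z μ hzμ]

variable [IsTopologicalAddGroup E] [ContinuousSMul ℝ E] [LocallyConvexSpace ℝ E]

lemma exists_separation_of_lt (hconv : Convex ℝ {p : E × ℝ | h p.1 ≤ p.2})
    (hclosed : IsClosed {p : E × ℝ | h p.1 ≤ p.2}) {x : E} {t : ℝ} (ht : (t : EReal) < h x) :
    ∃ (φ : E →L[ℝ] ℝ) (b u : ℝ), φ x + b * t < u ∧ ∀ z (μ : ℝ), h z ≤ μ → u < φ z + b * μ := by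
  obtain ⟨L, u, hxt, hsep⟩ := geometric_hahn_banach_point_closed hconv hclosed
    (show (x, t) ∉ {p : E × ℝ | h p.1 ≤ p.2} from not_le.2 ht)
  have hL : ∀ z (μ : ℝ), L (z, μ) = L.comp (.inl ℝ E ℝ) z + L (0, 1) * μ := by
    intro z μ
    rw [← L.comp_inl_add_comp_inr (z, μ), mul_comm, ← smul_eq_mul, ← map_smul]
    simp
  refine ⟨L.comp (.inl ℝ E ℝ), L (0, 1), u, ?_, fun z μ hzμ => ?_⟩
  · rw [← hL]; exact hxt
  · rw [← hL]; exact hsep (z, μ) hzμ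

variable (hbot : ∀ x, h x ≠ ⊥) (hproper : ∃ x, h x ≠ ⊤)
  (hconv : Convex ℝ {p : E × ℝ | h p.1 ≤ p.2}) (hclosed : IsClosed {p : E × ℝ | h p.1 ≤ p.2})
include hbot hproper hconv hclosed

lemma exists_forall_lt_add_apply_sub (x : E) :
    ∃ (ψ : E →L[ℝ] ℝ) (t : ℝ), ∀ z (μ : ℝ), h z ≤ μ → t < μ + ψ (x - z) := by
  obtain ⟨x₀, hx₀⟩ := hproper
  lift h x₀ to ℝ using ⟨hx₀, hbot x₀⟩ with c₀ hc₀
  obtain ⟨φ, b, u, hxt, hsep⟩ := exists_separation_of_lt hconv hclosed (x := x₀) (t := c₀ - 1)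
    (by rw [← hc₀]; exact_mod_cast sub_one_lt c₀)
  have hb : 0 < b := by linarith [hsep x₀ c₀ hc₀.ge]
  refine ⟨-b⁻¹ • φ, c₀ - 1 + (-b⁻¹ • φ) (x - x₀), fun z μ hzμ => ?_⟩
  have := forall_lt_add_apply_sub_of_separation hb hxt hsep z μ hzμ
  rw [show x - z = (x - x₀) + (x₀ - z) by abel, map_add]
  linarith

lemma exists_forall_lt_add_apply_sub_of_lt {x : E} {M : ℝ} (hM : (M : EReal) < h x) :
    ∃ ψ : E →L[ℝ] ℝ, ∀ z (μ : ℝ), h z ≤ μ → M < μ + ψ (x - z) := by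
  obtain ⟨φ, b, u, hxM, hsep⟩ := exists_separation_of_lt hconv hclosed hM
  have hb : 0 ≤ b := by
    obtain ⟨x₀, hx₀⟩ := hproper
    lift h x₀ to ℝ using ⟨hx₀, hbot x₀⟩ with c₀ hc₀
    exact nonneg_of_forall_ge_lt_add_mul fun μ hμ =>
      hsep x₀ μ (hc₀ ▸ EReal.coe_le_coe_iff.2 hμ)
  rcases hb.eq_or_lt with rfl | hb
  · obtain ⟨ψ₀, t₀, hψ₀⟩ := exists_forall_lt_add_apply_sub hbot hproper hconv hclosed x
    exact exists_forall_lt_add_apply_sub_of_vertical (by simpa using hxM)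
      (fun z μ hzμ => by simpa using hsep z μ hzμ) hψ₀ M
  · exact ⟨_, forall_lt_add_apply_sub_of_separation hb hxM hsep⟩

theorem iSup_iInf_add_apply_sub_eq (x : E) :
    ⨆ φ : E →L[ℝ] ℝ, ⨅ z, h z + (φ (x - z) : EReal) = h x := by
  refine le_antisymm (iSup_le fun φ => ?_) (EReal.ge_of_forall_gt_iff_ge.1 fun M hM => ?_)
  · simpa using iInf_le (fun z => h z + (φ (x - z) : EReal)) x
  obtain ⟨ψ, hψ⟩ := exists_forall_lt_add_apply_sub_of_lt hbot hproper hconv hclosed hM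
  refine le_iSup_of_le ψ (le_iInf fun z => ?_)
  rcases eq_or_ne (h z) ⊤ with hz | hz
  · rw [hz, EReal.top_add_coe]; exact le_top
  lift h z to ℝ using ⟨hz, hbot z⟩ with c hc
  exact_mod_cast (hψ z c hc.ge).le

end Epigraph

theorem iSup_iInf_add_inner_sub_eq {F : Type*} [NormedAddCommGroup F] [InnerProductSpace ℝ F]
    [CompleteSpace F] {h : F → EReal} (hbot : ∀ x, h x ≠ ⊥) (hproper : ∃ x, h x ≠ ⊤)
    (hconv : Convex ℝ {p : F × ℝ | h p.1 ≤ p.2}) (hclosed : IsClosed {p : F × ℝ | h p.1 ≤ p.2})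
    (x : F) : ⨆ p : F, ⨅ z, h z + (⟪p, x - z⟫_ℝ : EReal) = h x := by
  rw [← iSup_iInf_add_apply_sub_eq hbot hproper hconv hclosed x,
    ← (InnerProductSpace.toDual ℝ F).surjective.iSup_comp]
  simp only [InnerProductSpace.toDual_apply_apply]

section Moreau

variable {n : ℕ} (r : ℝ)

lemma neg_moreau_neg (g : EuclideanSpace ℝ (Fin n) → EReal) (x : EuclideanSpace ℝ (Fin n)) :
    -moreau r (fun y => -g y) x = ⨆ y, g y - (((r / 2) * ‖y - x‖ ^ 2 : ℝ) : EReal) := by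
  rw [moreau, EReal.neg_iInf]
  refine iSup_congr fun y => ?_
  rw [EReal.neg_add (.inr (EReal.coe_ne_top _)) (.inr (EReal.coe_ne_bot _)), neg_neg]

lemma moreau_sub_eq_iInf_add_inner (f : EuclideanSpace ℝ (Fin n) → EReal)
    (x y : EuclideanSpace ℝ (Fin n)) :
    moreau r f y - (((r / 2) * ‖y - x‖ ^ 2 : ℝ) : EReal) =
      (⨅ z, (f z + (((r / 2) * ‖z‖ ^ 2 : ℝ) : EReal)) + (⟪r • y, x - z⟫_ℝ : EReal)) -
        (((r / 2) * ‖x‖ ^ 2 : ℝ) : EReal) := by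
  rw [moreau, EReal.iInf_sub_coe, EReal.iInf_sub_coe]
  refine iInf_congr fun z => ?_
  have key : r / 2 * ‖z - y‖ ^ 2 - r / 2 * ‖y - x‖ ^ 2 =
      r / 2 * ‖z‖ ^ 2 + ⟪r • y, x - z⟫_ℝ - r / 2 * ‖x‖ ^ 2 := by
    rw [norm_sub_sq_real, norm_sub_sq_real, real_inner_smul_left, inner_sub_right,
      real_inner_comm z y]
    ring
  rw [add_assoc, ← EReal.coe_add, EReal.add_coe_sub_coe, EReal.add_coe_sub_coe, key]

end Moreau

theorem double_envelope_involution {n : ℕ} (f : EuclideanSpace ℝ (Fin n) → EReal)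
    (hne_bot : ∀ x, f x ≠ ⊥) (hproper : ∃ x, f x ≠ ⊤)
    (hlsc : LowerSemicontinuous f)
    (r : ℝ) (hr : 0 < r)
    (hconv : ∀ x y : EuclideanSpace ℝ (Fin n), ∀ a b : ℝ, 0 ≤ a → 0 ≤ b → a + b = 1 →
      f (a • x + b • y) + (((r / 2) * ‖a • x + b • y‖ ^ 2 : ℝ) : EReal) ≤
        (a : EReal) * (f x + (((r / 2) * ‖x‖ ^ 2 : ℝ) : EReal)) +
        (b : EReal) * (f y + (((r / 2) * ‖y‖ ^ 2 : ℝ) : EReal))) :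
    ∀ x, -(moreau r (fun y => -(moreau r f y)) x) = f x := by
  set h : EuclideanSpace ℝ (Fin n) → EReal := fun z => f z + (((r / 2) * ‖z‖ ^ 2 : ℝ) : EReal)
  have hbot : ∀ z, h z ≠ ⊥ := fun z => EReal.add_ne_bot_iff.2 ⟨hne_bot z, EReal.coe_ne_bot _⟩
  have hproper' : ∃ z, h z ≠ ⊤ := hproper.imp fun z hz => EReal.add_ne_top hz (EReal.coe_ne_top _)
  have hclosed :=
    (hlsc.add_real (g := fun z => r / 2 * ‖z‖ ^ 2) (by fun_prop)).isClosed_real_epigraph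
  have hsurj : Function.Surjective fun y : EuclideanSpace ℝ (Fin n) => r • y :=
    fun p => ⟨r⁻¹ • p, smul_inv_smul₀ hr.ne' p⟩
  intro x
  calc -(moreau r (fun y => -(moreau r f y)) x)
      = ⨆ y, (⨅ z, h z + (⟪r • y, x - z⟫_ℝ : EReal)) - (((r / 2) * ‖x‖ ^ 2 : ℝ) : EReal) := by
        simp only [neg_moreau_neg, moreau_sub_eq_iInf_add_inner, h]
    _ = (⨆ p, ⨅ z, h z + (⟪p, x - z⟫_ℝ : EReal)) - (((r / 2) * ‖x‖ ^ 2 : ℝ) : EReal) := by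
        rw [← EReal.iSup_sub_coe, hsurj.iSup_comp fun p => ⨅ z, h z + (⟪p, x - z⟫_ℝ : EReal)]
    _ = f x := by
        rw [iSup_iInf_add_inner_sub_eq hbot hproper' (convex_epigraph_of_forall_le hconv) hclosed,
          EReal.add_sub_cancel_right]
end

section
/- Let f : ℝ^n → ℝ ∪ {∞} be proper, lsc, prox-bounded, and suppose r exceeds the prox-threshold and P_r f is single-valued and Lipschitz continuous. Then e_r f is differentiable with ∇e_r f(x) = r(x - P_r f(x)), and ∇e_r f is Lipschitz continuous. -/
def proxSet {n : ℕ} (s : ℝ) (f : EuclideanSpace ℝ (Fin n) → EReal)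
    (x : EuclideanSpace ℝ (Fin n)) : Set (EuclideanSpace ℝ (Fin n)) :=
  {y | ∀ z, f y + (((s / 2) * ‖y - x‖ ^ 2 : ℝ) : EReal) ≤
        f z + (((s / 2) * ‖z - x‖ ^ 2 : ℝ) : EReal)}

/-!
At a proximal point `p = P x` the envelope is attained, `e_r f x = f p + (r/2)‖p - x‖²`, while
at any other point `w` the same `p` is a competitor: `e_r f w ≤ f p + (r/2)‖p - w‖²`. Expanding
the square turns this into the one-sided bound
`e_r f w - e_r f x - ⟪r • (x - P x), w - x⟫ ≤ (r/2)‖w - x‖²`.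
Applying it with `x` and `w` exchanged and using that `x ↦ r • (x - P x)` is Lipschitz gives
the matching lower bound, so the error of the linearisation is `O(‖w - x‖²)`.
-/

open scoped RealInnerProductSpace Topology

section Gradient

variable {F : Type*} [NormedAddCommGroup F] [InnerProductSpace ℝ F] [CompleteSpace F]

theorem hasGradientAt_of_abs_sub_inner_le {E : F → ℝ} {v x : F} {C : ℝ}
    (h : ∀ w, |E w - E x - ⟪v, w - x⟫| ≤ C * ‖w - x‖ ^ 2) : HasGradientAt E v x := by
  rw [hasGradientAt_iff_isLittleO_nhds_zero]
  have hO : (fun u => E (x + u) - E x - ⟪v, u⟫) =O[𝓝 0] fun u => ‖u‖ ^ 2 :=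
    Asymptotics.IsBigO.of_bound C <| Filter.Eventually.of_forall fun u => by
      simpa [Real.norm_eq_abs] using h (x + u)
  exact hO.trans_isLittleO (Asymptotics.isLittleO_norm_pow_id one_lt_two)

theorem hasGradientAt_of_lipschitzWith_of_sub_inner_le {E : F → ℝ} {g : F → F} {L : NNReal}
    {C : ℝ} (hg : LipschitzWith L g) (h : ∀ x w, E w - E x - ⟪g x, w - x⟫ ≤ C * ‖w - x‖ ^ 2)
    (x : F) : HasGradientAt E (g x) x := by
  refine hasGradientAt_of_abs_sub_inner_le (C := C + L) fun w => abs_le.mpr ⟨?_, ?_⟩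
  · have hswap := h w x
    have hcross : |⟪g w - g x, w - x⟫| ≤ L * ‖w - x‖ ^ 2 :=
      calc |⟪g w - g x, w - x⟫| ≤ ‖g w - g x‖ * ‖w - x‖ := abs_real_inner_le_norm _ _
        _ ≤ (L * ‖w - x‖) * ‖w - x‖ := by
          gcongr
          simpa only [dist_eq_norm] using hg.dist_le_mul w x
        _ = L * ‖w - x‖ ^ 2 := by ring
    rw [norm_sub_rev, ← neg_sub w x, inner_neg_right] at hswap
    rw [inner_sub_left] at hcross
    linarith [neg_abs_le (⟪g w, w - x⟫ - ⟪g x, w - x⟫)]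
  · have hL : (0 : ℝ) ≤ L * ‖w - x‖ ^ 2 := by positivity
    linarith [h x w]

end Gradient

section Moreau

variable {n : ℕ} {f : EuclideanSpace ℝ (Fin n) → EReal} {r : ℝ} {x y : EuclideanSpace ℝ (Fin n)}

theorem moreau_eq_of_mem_proxSet (hy : y ∈ proxSet r f x) :
    moreau r f x = f y + (((r / 2) * ‖y - x‖ ^ 2 : ℝ) : EReal) :=
  le_antisymm (iInf_le _ y) (le_iInf hy)

theorem ne_top_of_mem_proxSet {z : EuclideanSpace ℝ (Fin n)} (hy : y ∈ proxSet r f x)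
    (hz : f z ≠ ⊤) : f y ≠ ⊤ := by
  intro hfy
  have hle := hy z
  rw [hfy, EReal.top_add_coe, top_le_iff] at hle
  exact (EReal.add_lt_top hz (EReal.coe_ne_top _)).ne hle

theorem moreau_eq_coe_of_mem_proxSet (hy : y ∈ proxSet r f x) (htop : f y ≠ ⊤)
    (hbot : f y ≠ ⊥) : moreau r f x = (((f y).toReal + (r / 2) * ‖y - x‖ ^ 2 : ℝ) : EReal) := by
  rw [moreau_eq_of_mem_proxSet hy, EReal.coe_add, EReal.coe_toReal htop hbot]

theorem moreau_toReal_le {w : EuclideanSpace ℝ (Fin n)} (hw : moreau r f w ≠ ⊥)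
    (htop : f y ≠ ⊤) (hbot : f y ≠ ⊥) :
    (moreau r f w).toReal ≤ (f y).toReal + (r / 2) * ‖y - w‖ ^ 2 := by
  have hle : moreau r f w ≤ (((f y).toReal + (r / 2) * ‖y - w‖ ^ 2 : ℝ) : EReal) := by
    rw [EReal.coe_add, EReal.coe_toReal htop hbot]
    exact iInf_le _ y
  exact (EReal.toReal_le_toReal hle hw (EReal.coe_ne_top _)).trans_eq (EReal.toReal_coe _)

theorem moreau_toReal_sub_inner_le {P : EuclideanSpace ℝ (Fin n) → EuclideanSpace ℝ (Fin n)}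
    (hP : ∀ x, P x ∈ proxSet r f x) (htop : ∀ x, f (P x) ≠ ⊤) (hbot : ∀ x, f x ≠ ⊥)
    (x w : EuclideanSpace ℝ (Fin n)) :
    (moreau r f w).toReal - (moreau r f x).toReal - ⟪r • (x - P x), w - x⟫ ≤
      (r / 2) * ‖w - x‖ ^ 2 := by
  have hw : moreau r f w ≠ ⊥ := by
    rw [moreau_eq_coe_of_mem_proxSet (hP w) (htop w) (hbot _)]
    exact EReal.coe_ne_bot _
  have hsq : ‖P x - w‖ ^ 2 = ‖P x - x‖ ^ 2 + 2 * ⟪x - P x, w - x⟫ + ‖w - x‖ ^ 2 := by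
    rw [show P x - w = -((x - P x) + (w - x)) by abel, norm_neg, norm_add_sq_real,
      ← norm_neg (x - P x), neg_sub]
  rw [moreau_eq_coe_of_mem_proxSet (hP x) (htop x) (hbot _), EReal.toReal_coe,
    real_inner_smul_left]
  linarith [moreau_toReal_le hw (htop x) (hbot _), congrArg (r / 2 * ·) hsq]

end Moreau

theorem moreau_gradient_general {n : ℕ} (f : EuclideanSpace ℝ (Fin n) → EReal)
    (hne_bot : ∀ x, f x ≠ ⊥) (hproper : ∃ x, f x ≠ ⊤)
    (r : ℝ)
    (P : EuclideanSpace ℝ (Fin n) → EuclideanSpace ℝ (Fin n))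
    (hP : ∀ x, proxSet r f x = {P x})
    (K : NNReal) (hPlip : LipschitzWith K P) :
    (∀ x, HasGradientAt (fun y => (moreau r f y).toReal) (r • (x - P x)) x) ∧
    (∃ K' : NNReal, LipschitzWith K' (fun x => r • (x - P x))) := by
  have hprox : ∀ x, P x ∈ proxSet r f x := fun x => (hP x).symm ▸ rfl
  obtain ⟨z, hz⟩ := hproper
  have htop : ∀ x, f (P x) ≠ ⊤ := fun x => ne_top_of_mem_proxSet (hprox x) hz
  have hlip : LipschitzWith (‖r‖₊ * (1 + K)) fun x => r • (x - P x) :=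
    (lipschitzWith_smul r).comp (LipschitzWith.id.sub hPlip)
  exact ⟨hasGradientAt_of_lipschitzWith_of_sub_inner_le hlip
    (moreau_toReal_sub_inner_le hprox htop hne_bot), _, hlip⟩

theorem moreau_gradient {n : ℕ} (f : EuclideanSpace ℝ (Fin n) → EReal)
    (hne_bot : ∀ x, f x ≠ ⊥) (hproper : ∃ x, f x ≠ ⊤)
    (hlsc : LowerSemicontinuous f)
    (rbar : ℝ)
    (hpb : ∀ s : ℝ, rbar < s → ∀ x, moreau s f x ≠ ⊥)
    (r : ℝ) (hr : rbar < r) (hrpos : 0 < r)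
    (P : EuclideanSpace ℝ (Fin n) → EuclideanSpace ℝ (Fin n))
    (hP : ∀ x, proxSet r f x = {P x})
    (K : NNReal) (hPlip : LipschitzWith K P) :
    (∀ x, HasGradientAt (fun y => (moreau r f y).toReal) (r • (x - P x)) x) ∧
    (∃ K' : NNReal, LipschitzWith K' (fun x => r • (x - P x))) :=
  moreau_gradient_general f hne_bot hproper r P hP K hPlip
end

section
/- Let f₁,...,f_m : ℝ^n → ℝ ∪ {∞} be proper, lsc, convex, and bounded below, let r > 0 and λ ∈ Λ. Then argmin_x PA_r(x,λ) = argmin_x Σ_{i=1}^m λ_i e_r f_i(x), where PA_r(x,λ) := -e_{r+δ(λ)}( -Σ_i λ_i e_r f_i )(x). -/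
open scoped RealInnerProductSpace
open Filter Topology

theorem EReal.coe_finset_sum {ι : Type*} (s : Finset ι) (g : ι → ℝ) :
    ((∑ i ∈ s, g i : ℝ) : EReal) = ∑ i ∈ s, (g i : EReal) :=
  map_sum (⟨⟨(↑), EReal.coe_zero⟩, EReal.coe_add⟩ : ℝ →+ EReal) g s

theorem inner_add_half_mul_norm_sq_le {E : Type*} [NormedAddCommGroup E]
    [InnerProductSpace ℝ E] {s : ℝ} (hs : 0 < s) (v u : E) :
    ⟪v, u⟫ + s / 2 * ‖u‖ ^ 2 ≤ s / 2 * ‖u + s⁻¹ • v‖ ^ 2 := by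
  have hexpand : s / 2 * ‖u + s⁻¹ • v‖ ^ 2 = ⟪v, u⟫ + s / 2 * ‖u‖ ^ 2 + s⁻¹ / 2 * ‖v‖ ^ 2 := by
    rw [norm_add_sq_real, inner_smul_right, norm_smul, mul_pow, Real.norm_eq_abs, sq_abs,
      real_inner_comm]
    field_simp
    ring
  rw [hexpand]
  have : 0 ≤ s⁻¹ / 2 * ‖v‖ ^ 2 := by positivity
  linarith

/-- An ε-supergradient form of `r`-semiconcavity (concavity of `g - (r/2)‖·‖²`). -/
def ApproxSemiconcave {E : Type*} [NormedAddCommGroup E] [InnerProductSpace ℝ E] (r : ℝ)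
    (g : E → ℝ) : Prop :=
  ∀ z, ∀ ε > 0, ∃ v : E, ∀ y, g y ≤ g z + ε + ⟪v, z - y⟫ + r / 2 * ‖z - y‖ ^ 2

namespace ApproxSemiconcave

variable {E : Type*} [NormedAddCommGroup E] [InnerProductSpace ℝ E] {r s : ℝ} {g : E → ℝ}

theorem mono (hg : ApproxSemiconcave r g) (hrs : r ≤ s) : ApproxSemiconcave s g := by
  intro z ε hε
  obtain ⟨v, hv⟩ := hg z ε hε
  refine ⟨v, fun y => (hv y).trans ?_⟩
  gcongr

theorem sum_mul {ι : Type*} [Fintype ι] {g : ι → E → ℝ} {lam : ι → ℝ}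
    (hg : ∀ i, ApproxSemiconcave r (g i)) (hlam0 : ∀ i, 0 ≤ lam i) (hlam1 : ∑ i, lam i = 1) :
    ApproxSemiconcave r (fun x => ∑ i, lam i * g i x) := by
  intro z ε hε
  choose v hv using fun i => hg i z ε hε
  refine ⟨∑ i, lam i • v i, fun y => ?_⟩
  calc ∑ i, lam i * g i y
      ≤ ∑ i, lam i * (g i z + ε + ⟪v i, z - y⟫ + r / 2 * ‖z - y‖ ^ 2) :=
        Finset.sum_le_sum fun i _ => mul_le_mul_of_nonneg_left (hv i y) (hlam0 i)
    _ = ∑ i, lam i * g i z + ε + ⟪∑ i, lam i • v i, z - y⟫ + r / 2 * ‖z - y‖ ^ 2 := by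
        simp only [mul_add, Finset.sum_add_distrib, ← Finset.sum_mul, hlam1, one_mul, sum_inner,
          real_inner_smul_left]

theorem le_add_of_forall_le (hg : ApproxSemiconcave r g) (hr : 0 < r) {x : E}
    (hx : ∀ z, g x ≤ g z) (y : E) : g y ≤ g x + r / 2 * ‖y - x‖ ^ 2 := by
  have hbound : ∀ ε > 0, g y - g x - r / 2 * ‖y - x‖ ^ 2 ≤ ε + √(2 * r * ε) * ‖y - x‖ := by
    intro ε hε
    obtain ⟨v, hv⟩ := hg x ε hε
    -- testing the majorant at the minimizer `x` against `x + r⁻¹ • v` shows that `v` is small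
    have hv_sq : ‖v‖ ^ 2 ≤ 2 * r * ε := by
      have h := hv (x + r⁻¹ • v)
      rw [sub_add_cancel_left, inner_neg_right, norm_neg, real_inner_smul_right,
        real_inner_self_eq_norm_sq, norm_smul, mul_pow, Real.norm_eq_abs, sq_abs] at h
      have h' : r⁻¹ / 2 * ‖v‖ ^ 2 ≤ ε := by
        have hcoef : r / 2 * (r⁻¹ ^ 2 * ‖v‖ ^ 2) = r⁻¹ / 2 * ‖v‖ ^ 2 := by
          field_simp
        linarith [hx (x + r⁻¹ • v)]
      calc ‖v‖ ^ 2 = 2 * r * (r⁻¹ / 2 * ‖v‖ ^ 2) := by field_simp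
        _ ≤ 2 * r * ε := by gcongr
    have hv_norm : ‖v‖ ≤ √(2 * r * ε) := Real.le_sqrt_of_sq_le hv_sq
    have hinner : ⟪v, x - y⟫ ≤ √(2 * r * ε) * ‖y - x‖ := by
      refine (real_inner_le_norm v _).trans ?_
      rw [norm_sub_rev]
      gcongr
    have := hv y
    rw [norm_sub_rev x y] at this
    linarith
  have hlim : Tendsto (fun ε => ε + √(2 * r * ε) * ‖y - x‖) (𝓝[>] 0) (𝓝 0) := by
    have hcont : Continuous (fun ε => ε + √(2 * r * ε) * ‖y - x‖) := by fun_prop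
    simpa using (hcont.tendsto 0).mono_left nhdsWithin_le_nhds
  have := ge_of_tendsto hlim (eventually_nhdsWithin_of_forall hbound)
  linarith

end ApproxSemiconcave

section Moreau

variable {n : ℕ} {r s : ℝ}

theorem moreau_le_self (f : EuclideanSpace ℝ (Fin n) → EReal) (x : EuclideanSpace ℝ (Fin n)) :
    moreau r f x ≤ f x :=
  calc moreau r f x ≤ f x + (((r / 2) * ‖x - x‖ ^ 2 : ℝ) : EReal) := iInf_le _ x
    _ = f x := by simp

theorem coe_toReal_moreau {f : EuclideanSpace ℝ (Fin n) → EReal}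
    (hbdd : ∃ c : ℝ, ∀ x, (c : EReal) ≤ f x) (hproper : ∃ x, f x ≠ ⊤) (hr : 0 ≤ r)
    (x : EuclideanSpace ℝ (Fin n)) : ((moreau r f x).toReal : EReal) = moreau r f x := by
  obtain ⟨c, hc⟩ := hbdd
  obtain ⟨x₀, hx₀⟩ := hproper
  have hc_le : (c : EReal) ≤ moreau r f x :=
    le_iInf fun y => (hc y).trans (le_add_of_nonneg_right (EReal.coe_nonneg.2 (by positivity)))
  have hlt_top : moreau r f x < ⊤ :=
    (iInf_le _ x₀).trans_lt (EReal.add_lt_top hx₀ (EReal.coe_ne_top _))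
  exact EReal.coe_toReal hlt_top.ne ((EReal.bot_lt_coe c).trans_le hc_le).ne'

theorem approxSemiconcave_toReal_moreau {f : EuclideanSpace ℝ (Fin n) → EReal}
    (hbdd : ∃ c : ℝ, ∀ x, (c : EReal) ≤ f x) (hproper : ∃ x, f x ≠ ⊤) (hr : 0 ≤ r) :
    ApproxSemiconcave r (fun x => (moreau r f x).toReal) := by
  have hfin := coe_toReal_moreau hbdd hproper hr
  obtain ⟨c, hc⟩ := hbdd
  intro z ε hε
  have hlt : moreau r f z < (((moreau r f z).toReal + ε : ℝ) : EReal) :=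
    calc moreau r f z = ((moreau r f z).toReal : EReal) := (hfin z).symm
      _ < _ := EReal.coe_lt_coe_iff.2 (lt_add_of_pos_right _ hε)
  obtain ⟨w, hw⟩ := iInf_lt_iff.1 hlt
  have hw_top : f w ≠ ⊤ := by
    intro h
    rw [h, EReal.top_add_of_ne_bot (EReal.coe_ne_bot _)] at hw
    exact not_top_lt hw
  have hfw : f w = ((f w).toReal : EReal) :=
    (EReal.coe_toReal hw_top ((EReal.bot_lt_coe c).trans_le (hc w)).ne').symm
  rw [hfw, ← EReal.coe_add, EReal.coe_lt_coe_iff] at hw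
  refine ⟨r • (w - z), fun y => ?_⟩
  have hy : (moreau r f y).toReal ≤ (f w).toReal + r / 2 * ‖w - y‖ ^ 2 := by
    have h : moreau r f y ≤ f w + (((r / 2) * ‖w - y‖ ^ 2 : ℝ) : EReal) := iInf_le _ w
    rwa [hfw, ← EReal.coe_add, ← hfin y, EReal.coe_le_coe_iff] at h
  have hexpand : ‖w - y‖ ^ 2 = ‖w - z‖ ^ 2 + 2 * ⟪w - z, z - y⟫ + ‖z - y‖ ^ 2 := by
    rw [← norm_add_sq_real, sub_add_sub_cancel]
  show (moreau r f y).toReal ≤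
    (moreau r f z).toReal + ε + ⟪r • (w - z), z - y⟫ + r / 2 * ‖z - y‖ ^ 2
  rw [real_inner_smul_left]
  linear_combination hy + hw.le + r / 2 * hexpand

theorem le_moreau_neg_of_le_add {g : EuclideanSpace ℝ (Fin n) → ℝ} {x : EuclideanSpace ℝ (Fin n)}
    (h : ∀ y, g y ≤ g x + s / 2 * ‖y - x‖ ^ 2) :
    -(g x : EReal) ≤ moreau s (fun y => -(g y : EReal)) x :=
  le_iInf fun y => by
    dsimp only
    rw [← EReal.coe_neg, ← EReal.coe_neg, ← EReal.coe_add, EReal.coe_le_coe_iff]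
    linarith [h y]

namespace ApproxSemiconcave

variable {g : EuclideanSpace ℝ (Fin n) → ℝ}

theorem exists_le_moreau_neg (hg : ApproxSemiconcave s g) (hs : 0 < s)
    (z : EuclideanSpace ℝ (Fin n)) {ε : ℝ} (hε : 0 < ε) :
    ∃ x, ((-g z - ε : ℝ) : EReal) ≤ moreau s (fun y => -(g y : EReal)) x := by
  obtain ⟨v, hv⟩ := hg z ε hε
  refine ⟨z + s⁻¹ • v, le_iInf fun y => ?_⟩
  dsimp only
  rw [← EReal.coe_neg, ← EReal.coe_add, EReal.coe_le_coe_iff]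
  have hnorm : ‖y - (z + s⁻¹ • v)‖ = ‖z - y + s⁻¹ • v‖ := by
    rw [← norm_neg]
    congr 1
    abel
  rw [hnorm]
  linarith [hv y, inner_add_half_mul_norm_sq_le hs v (z - y)]

theorem argmin_neg_moreau_neg (hg : ApproxSemiconcave s g) (hs : 0 < s) :
    {x | ∀ z, -moreau s (fun y => -(g y : EReal)) x ≤ -moreau s (fun y => -(g y : EReal)) z} =
      {x | ∀ z, g x ≤ g z} := by
  ext x
  simp only [Set.mem_ofPred_eq, EReal.neg_le_neg_iff]
  constructor
  · intro hx z
    refine le_of_forall_pos_le_add fun ε hε => ?_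
    obtain ⟨x', hx'⟩ := hg.exists_le_moreau_neg hs z hε
    have h := hx'.trans ((hx x').trans (moreau_le_self _ x))
    rw [← EReal.coe_neg, EReal.coe_le_coe_iff] at h
    linarith
  · intro hx z
    calc moreau s (fun y => -(g y : EReal)) z ≤ -(g z : EReal) := moreau_le_self _ z
      _ ≤ -(g x : EReal) := EReal.neg_le_neg_iff.2 (EReal.coe_le_coe_iff.2 (hx z))
      _ ≤ moreau s (fun y => -(g y : EReal)) x :=
        le_moreau_neg_of_le_add fun y => hg.le_add_of_forall_le hs hx y

end ApproxSemiconcave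

end Moreau

theorem argmin_ncProxAverage_eq_general {n m : ℕ}
    (f : Fin m → EuclideanSpace ℝ (Fin n) → EReal)
    (hproper : ∀ i, ∃ x, f i x ≠ ⊤)
    (hbdd : ∀ i, ∃ c : ℝ, ∀ x, (c : EReal) ≤ f i x)
    (r : ℝ) (hr : 0 < r)
    (δ : (Fin m → ℝ) → ℝ)
    (hδnn : ∀ lam ∈ simplex m, 0 ≤ δ lam)
    (lam : Fin m → ℝ) (hlam : lam ∈ simplex m) :
    {x | ∀ z, -(moreau (r + δ lam)
          (fun y => -(∑ i, (lam i : EReal) * moreau r (f i) y)) x) ≤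
        -(moreau (r + δ lam)
          (fun y => -(∑ i, (lam i : EReal) * moreau r (f i) y)) z)} =
    {x | ∀ z, (∑ i, (lam i : EReal) * moreau r (f i) x) ≤
        ∑ i, (lam i : EReal) * moreau r (f i) z} := by
  have hδ := hδnn lam hlam
  obtain ⟨hlam0, hlam1⟩ := hlam
  set g := fun x => ∑ i, lam i * (moreau r (f i) x).toReal
  have hsum : ∀ x, ∑ i, (lam i : EReal) * moreau r (f i) x = (g x : EReal) := fun x => by
    simp only [g, EReal.coe_finset_sum, EReal.coe_mul,
      coe_toReal_moreau (hbdd _) (hproper _) hr.le]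
  have hg : ApproxSemiconcave (r + δ lam) g :=
    (ApproxSemiconcave.sum_mul
      (fun i => approxSemiconcave_toReal_moreau (hbdd i) (hproper i) hr.le) hlam0 hlam1).mono
      (le_add_of_nonneg_right hδ)
  simp only [hsum, EReal.coe_le_coe_iff]
  exact hg.argmin_neg_moreau_neg (by linarith)

theorem argmin_ncProxAverage_eq {n m : ℕ}
    (f : Fin m → EuclideanSpace ℝ (Fin n) → EReal)
    (hne_bot : ∀ i x, f i x ≠ ⊥) (hproper : ∀ i, ∃ x, f i x ≠ ⊤)
    (hlsc : ∀ i, LowerSemicontinuous (f i))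
    (hconv : ∀ i, ∀ x y : EuclideanSpace ℝ (Fin n), ∀ a b : ℝ, 0 ≤ a → 0 ≤ b → a + b = 1 →
      f i (a • x + b • y) ≤ (a : EReal) * f i x + (b : EReal) * f i y)
    (hbdd : ∀ i, ∃ c : ℝ, ∀ x, (c : EReal) ≤ f i x)
    (r : ℝ) (hr : 0 < r)
    (δ : (Fin m → ℝ) → ℝ)
    (hδcont : ContinuousOn δ (simplex m))
    (hδnn : ∀ lam ∈ simplex m, 0 ≤ δ lam)
    (hδ0 : ∀ lam ∈ simplex m, (δ lam = 0 ↔ ∃ i, lam = Pi.single i 1))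
    (lam : Fin m → ℝ) (hlam : lam ∈ simplex m) :
    {x | ∀ z, -(moreau (r + δ lam)
          (fun y => -(∑ i, (lam i : EReal) * moreau r (f i) y)) x) ≤
        -(moreau (r + δ lam)
          (fun y => -(∑ i, (lam i : EReal) * moreau r (f i) y)) z)} =
    {x | ∀ z, (∑ i, (lam i : EReal) * moreau r (f i) x) ≤
        ∑ i, (lam i : EReal) * moreau r (f i) z} :=
  argmin_ncProxAverage_eq_general f hproper hbdd r hr δ hδnn lam hlam
end
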